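/- Let R be a Mori ring (a commutative ring satisfying the ACC on regular divisorial ideals). Then the monoid H = R^• of regular elements is a Mori monoid, i.e., H satisfies the ACC on divisorial ideals of H. -/

import Mathlib

open scoped Pointwise

/-- For subsets `Z, X` of the total quotient ring `T`, the colon set
`(Z : X) = {a ∈ T | a X ⊆ Z}`. -/
def colonSet (T : Type*) [CommRing T] (Z X : Set T) : Set T :=
  {a : T | ∀ x ∈ X, a * x ∈ Z}

/-- The image of `R` inside its total quotient ring `T`. -/
def ringSet (R T : Type*) [CommRing R] [CommRing T] [Algebra R T] : Set T :=
  Set.range (algebraMap R T)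

/-- `X⁻¹ = (R : X)` for a subset `X ⊆ T`. -/
def invSet (R T : Type*) [CommRing R] [CommRing T] [Algebra R T] (X : Set T) : Set T :=
  colonSet T (ringSet R T) X

/-- The divisorial (v-) closure `X_v = (X⁻¹)⁻¹` of a subset `X ⊆ T`. -/
def vSet (R T : Type*) [CommRing R] [CommRing T] [Algebra R T] (X : Set T) : Set T :=
  invSet R T (invSet R T X)

/-- The set of regular elements (non-zero-divisors) of `T`. -/
def regSet (T : Type*) [CommRing T] : Set T :=
  {t : T | t ∈ nonZeroDivisors T}

/-- The colon set computed inside `Q = T^• ` : `(Z :_Q X) = {a ∈ Q | a X ⊆ Z}`. -/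
def colonQ (T : Type*) [CommRing T] (Z X : Set T) : Set T :=
  {a : T | a ∈ nonZeroDivisors T ∧ ∀ x ∈ X, a * x ∈ Z}

/-- The monoid `H = R^•` of regular elements of `R`, viewed inside `T`. -/
def HSet (R T : Type*) [CommRing R] [CommRing T] [Algebra R T] : Set T :=
  ringSet R T ∩ regSet T

/-- The v-closure of a subset of `Q = T^•` with respect to the monoid `H = R^•`. -/
def vMon (R T : Type*) [CommRing R] [CommRing T] [Algebra R T] (X : Set T) : Set T :=
  colonQ T (HSet R T) (colonQ T (HSet R T) X)

/-- `X ⊆ T` is `R`-fractional: `cX ⊆ R` for some regular `c ∈ R^•`. -/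
def isFrac (R T : Type*) [CommRing R] [CommRing T] [Algebra R T] (X : Set T) : Prop :=
  ∃ c : R, c ∈ nonZeroDivisors R ∧ ∀ x ∈ X, algebraMap R T c * x ∈ ringSet R T

/-- The complete integral closure `R̂` of `R` in `T`. -/
def hatSet (R T : Type*) [CommRing R] [CommRing T] [Algebra R T] : Set T :=
  {x : T | ∃ c : R, c ∈ nonZeroDivisors R ∧
    ∀ n : ℕ, 1 ≤ n → algebraMap R T c * x ^ n ∈ ringSet R T}

/-- The complete integral closure `Ĥ` of the monoid `H = R^•` in `q(H) = T^•`. -/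
def monHat (R T : Type*) [CommRing R] [CommRing T] [Algebra R T] : Set T :=
  {x : T | x ∈ nonZeroDivisors T ∧
    ∃ c ∈ HSet R T, ∀ n : ℕ, 1 ≤ n → c * x ^ n ∈ HSet R T}

/-- `R` is a v-Marot ring: every regular fractional divisorial ideal is
v-generated by its regular elements. -/
def isVMarot (R T : Type*) [CommRing R] [CommRing T] [Algebra R T] : Prop :=
  ∀ I : Set T, (I ∩ regSet T).Nonempty → isFrac R T I → vSet R T I = I →
    I = vSet R T (I ∩ regSet T)

/-! A divisorial monoid ideal `𝔞` of `H = R^•` is recovered from the ring-theoretic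
v-closure as `𝔞 = (𝔞_{v_R})^•`, and for `𝔞 ≠ ∅` the closure `𝔞_{v_R}` is a regular
divisorial ideal of `R`. So an ascending chain of divisorial ideals of `H`, once
nonempty, is the chain of regular elements of an ascending chain of regular divisorial
ideals of `R`, which stabilizes because `R` is Mori. -/

section VClosure

variable {R T : Type*} [CommRing R] [CommRing T] [Algebra R T] {X Y : Set T}

lemma invSet_anti (h : X ⊆ Y) : invSet R T Y ⊆ invSet R T X :=
  fun _ ha y hy => ha y (h hy)

lemma subset_vSet (X : Set T) : X ⊆ vSet R T X :=
  fun x hx _ ha => by simpa [mul_comm] using ha x hx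

lemma vSet_mono (h : X ⊆ Y) : vSet R T X ⊆ vSet R T Y :=
  invSet_anti (invSet_anti h)

lemma invSet_vSet (X : Set T) : invSet R T (vSet R T X) = invSet R T X :=
  (invSet_anti (subset_vSet X)).antisymm (subset_vSet _)

lemma vSet_idem (X : Set T) : vSet R T (vSet R T X) = vSet R T X := by
  rw [vSet, invSet_vSet]
  rfl

lemma vSet_subset_ringSet (h : X ⊆ ringSet R T) : vSet R T X ⊆ ringSet R T := by
  intro a ha
  have one_mem : (1 : T) ∈ invSet R T X := fun y hy => by simpa using h hy
  simpa using ha 1 one_mem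

lemma subset_vSet_inter_regSet (h : X ⊆ HSet R T) : X ⊆ vSet R T X ∩ regSet T :=
  fun _ hx => ⟨subset_vSet X hx, (h hx).2⟩

lemma vSet_inter_regSet_subset_vMon (X : Set T) : vSet R T X ∩ regSet T ⊆ vMon R T X := by
  rintro a ⟨ha, ha_reg⟩
  refine ⟨ha_reg, fun x ⟨hx_reg, hx⟩ => ⟨ha x fun y hy => (hx y hy).1, mul_mem ha_reg hx_reg⟩⟩

lemma vSet_inter_regSet_eq_of_vMon_eq (h : X ⊆ HSet R T) (hv : vMon R T X = X) :
    vSet R T X ∩ regSet T = X :=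
  ((vSet_inter_regSet_subset_vMon X).trans hv.le).antisymm (subset_vSet_inter_regSet h)

end VClosure

theorem stmt16_general (R T : Type*) [CommRing R] [CommRing T] [Algebra R T]
    (hMori : ∀ f : ℕ → Set T, (∀ n, f n ⊆ ringSet R T) → (∀ n, (f n ∩ regSet T).Nonempty) →
      (∀ n, vSet R T (f n) = f n) → (∀ n, f n ⊆ f (n + 1)) →
      ∃ N, ∀ n, N ≤ n → f n = f N) :
    ∀ f : ℕ → Set T, (∀ n, f n ⊆ HSet R T) → (∀ n, vMon R T (f n) = f n) →
      (∀ n, f n ⊆ f (n + 1)) → ∃ N, ∀ n, N ≤ n → f n = f N := by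
  intro f hH hv hchain
  have hmono : Monotone f := monotone_nat_of_le_succ hchain
  by_cases hempty : ∀ n, f n = ∅
  · exact ⟨0, fun n _ => by rw [hempty n, hempty 0]⟩
  obtain ⟨m, hm⟩ := not_forall.mp hempty
  obtain ⟨x, hx⟩ := Set.nonempty_iff_ne_empty.mpr hm
  obtain ⟨N, hN⟩ := hMori (fun n => vSet R T (f (m + n)))
    (fun n => vSet_subset_ringSet fun y hy => (hH _ hy).1)
    (fun n => ⟨x, subset_vSet_inter_regSet (hH _) (hmono (Nat.le_add_right m n) hx)⟩)
    (fun n => vSet_idem _)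
    (fun n => vSet_mono (hmono (by omega)))
  refine ⟨m + N, fun n hn => ?_⟩
  obtain ⟨k, rfl⟩ := Nat.exists_eq_add_of_le ((Nat.le_add_right m N).trans hn)
  rw [← vSet_inter_regSet_eq_of_vMon_eq (hH _) (hv _),
    ← vSet_inter_regSet_eq_of_vMon_eq (hH (m + N)) (hv _), hN k (by omega)]

theorem stmt16 (R T : Type*) [CommRing R] [CommRing T] [Algebra R T] [IsFractionRing R T]
    (hMori : ∀ f : ℕ → Set T, (∀ n, f n ⊆ ringSet R T) → (∀ n, (f n ∩ regSet T).Nonempty) →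
      (∀ n, vSet R T (f n) = f n) → (∀ n, f n ⊆ f (n + 1)) →
      ∃ N, ∀ n, N ≤ n → f n = f N) :
    ∀ f : ℕ → Set T, (∀ n, f n ⊆ HSet R T) → (∀ n, vMon R T (f n) = f n) →
      (∀ n, f n ⊆ f (n + 1)) → ∃ N, ∀ n, N ≤ n → f n = f N :=
  stmt16_general R T hMori
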